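/- Suppose H0 holds. Let (x_k) be a sequence in int(dom φ) that is D-Fejér monotone with respect to C, i.e., for every x ∈ C and every k ∈ ℕ, D_φ(x, x_{k+1}) ≤ D_φ(x, x_k). If D_C(x_k) → 0 and condition SC holds, then (x_k) converges to some point of C ∩ int(dom φ). -/

import Mathlib

open Set Filter Topology MeasureTheory ProbabilityTheory
open scoped InnerProductSpace ENNReal Classical

noncomputable section

/-- A Legendre function on a Euclidean space `X`, represented by its (finite) values `f` on its
effective domain `dom`, together with the data of its Fenchel conjugate (`conj` on `domConj`)
and the gradients of both. -/
structure LegendreFn (X : Type*) [NormedAddCommGroup X] [InnerProductSpace ℝ X]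
    [FiniteDimensional ℝ X] where
  /-- the values of `φ` on its domain -/
  f : X → ℝ
  /-- the effective domain of `φ` (`φ = +∞` outside of it) -/
  dom : Set X
  /-- the values of the Fenchel conjugate `φ*` on its domain -/
  conj : X → ℝ
  /-- the effective domain of `φ*` -/
  domConj : Set X
  /-- the gradient of `φ` (meaningful on `interior dom`) -/
  grad : X → X
  /-- the gradient of `φ*` (meaningful on `interior domConj`) -/
  gradConj : X → X
  dom_nonempty : dom.Nonempty
  int_dom_nonempty : (interior dom).Nonempty
  dom_convex : Convex ℝ dom
  convexOn : ConvexOn ℝ dom f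
  /-- `φ` is closed: the epigraph of the extended function is closed -/
  closedEpi : IsClosed {p : X × ℝ | p.1 ∈ dom ∧ f p.1 ≤ p.2}
  /-- essential smoothness, part 1: differentiability on the interior of the domain -/
  hasGrad : ∀ x ∈ interior dom, HasGradientAt f (grad x) x
  /-- essential smoothness, part 2: the gradient blows up at the boundary -/
  grad_blowup : ∀ (u : ℕ → X) (x : X), (∀ n, u n ∈ interior dom) → x ∈ frontier dom →
      Tendsto u atTop (nhds x) → Tendsto (fun n => ‖grad (u n)‖) atTop atTop
  /-- `domConj` is the set where the conjugate supremum is finite -/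
  domConj_spec : ∀ y : X, y ∈ domConj ↔ BddAbove ((fun x => ⟪x, y⟫_ℝ - f x) '' dom)
  /-- `conj` is the Fenchel conjugate of `φ` -/
  conj_spec : ∀ y ∈ domConj, IsLUB ((fun x => ⟪x, y⟫_ℝ - f x) '' dom) (conj y)
  int_domConj_nonempty : (interior domConj).Nonempty
  /-- essential strict convexity: `φ` is strictly convex on every convex subset of `dom ∂φ` -/
  strict : ∀ s : Set X,
      s ⊆ {x ∈ dom | ∃ v : X, ∀ z ∈ dom, f x + ⟪v, z - x⟫_ℝ ≤ f z} →
      Convex ℝ s → StrictConvexOn ℝ s f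
  hasGradConj : ∀ y ∈ interior domConj, HasGradientAt conj (gradConj y) y
  /-- Bregman projections onto closed convex sets meeting `interior dom` exist
  (Bauschke–Borwein). -/
  proj_exists : ∀ S : Set X, IsClosed S → Convex ℝ S → (S ∩ interior dom).Nonempty →
      ∀ x ∈ interior dom, ∃ p ∈ S ∩ interior dom, ∀ z ∈ S ∩ dom,
        f p - ⟪p, grad x⟫_ℝ ≤ f z - ⟪z, grad x⟫_ℝ

namespace LegendreFn

variable {X : Type*} [NormedAddCommGroup X] [InnerProductSpace ℝ X] [FiniteDimensional ℝ X]

/-- The Bregman distance `D_φ(x, y)`; the formula is meaningful for `x ∈ dom φ` and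
`y ∈ int (dom φ)`. -/
def breg (L : LegendreFn X) (x y : X) : ℝ :=
  L.f x - L.f y - ⟪x - y, L.grad y⟫_ℝ

/-- The Bregman distance from the point `y` to the set `S`: `D_S(y) = inf_{z ∈ S} D_φ(z, y)`. -/
def distTo (L : LegendreFn X) (S : Set X) (y : X) : ℝ :=
  sInf ((fun z => L.breg z y) '' (S ∩ L.dom))

/-- `p` is the Bregman projection of `x` onto `S`. -/
def IsBregProj (L : LegendreFn X) (S : Set X) (x p : X) : Prop :=
  p ∈ S ∧ p ∈ interior L.dom ∧ ∀ z ∈ S ∩ L.dom, L.breg p x ≤ L.breg z x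

/-- The Bregman projection of `x` onto `S` (as a function; well defined whenever the Bregman
projection exists, since it is then unique). -/
def proj (L : LegendreFn X) (S : Set X) (x : X) : X :=
  @Classical.epsilon X ⟨0⟩ (L.IsBregProj S x)

end LegendreFn

/-- Condition SC (sequential consistency). -/
def SCcond {X : Type*} [NormedAddCommGroup X] [InnerProductSpace ℝ X] [FiniteDimensional ℝ X]
    (L : LegendreFn X) : Prop :=
  ∀ z y : ℕ → X, (∀ n, z n ∈ interior L.dom) → (∀ n, y n ∈ interior L.dom) →
    Bornology.IsBounded (Set.range z) → Bornology.IsBounded (Set.range y) →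
    Tendsto (fun n => L.breg (z n) (y n)) atTop (nhds 0) →
    Tendsto (fun n => z n - y n) atTop (nhds 0)

/-- Assumption H0: `C ≠ X`, `dom φ*` is open and `int (dom φ) ∩ C ≠ ∅`
(`φ` being Legendre is part of the `LegendreFn` structure). -/
def H0 {X : Type*} [NormedAddCommGroup X] [InnerProductSpace ℝ X] [FiniteDimensional ℝ X]
    (L : LegendreFn X) (C : Set X) : Prop :=
  C ≠ Set.univ ∧ IsOpen L.domConj ∧ (interior L.dom ∩ C).Nonempty

/-- `G` is the Moore–Penrose pseudoinverse of `T`. -/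
def IsMPInv {E F : Type*} [NormedAddCommGroup E] [InnerProductSpace ℝ E] [FiniteDimensional ℝ E]
    [NormedAddCommGroup F] [InnerProductSpace ℝ F] [FiniteDimensional ℝ F]
    (T : E →L[ℝ] F) (G : F →L[ℝ] E) : Prop :=
  T ∘L G ∘L T = T ∧ G ∘L T ∘L G = G ∧
    ContinuousLinearMap.adjoint (T ∘L G) = T ∘L G ∧
    ContinuousLinearMap.adjoint (G ∘L T) = G ∘L T

/-- The orthogonal projection onto a subspace, as a map `X →L[ℝ] X`. -/
def projL {X : Type*} [NormedAddCommGroup X] [InnerProductSpace ℝ X] [FiniteDimensional ℝ X]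
    (K : Submodule ℝ X) : X →L[ℝ] X :=
  K.subtypeL.comp (K.orthogonalProjection)

/-- The set `K(x)` of points having the same Bregman projection onto `C` as `x` and not larger
Bregman distance to `C`. -/
def Kset {X : Type*} [NormedAddCommGroup X] [InnerProductSpace ℝ X] [FiniteDimensional ℝ X]
    (L : LegendreFn X) (C : Set X) (x : X) : Set X :=
  {z | z ∈ interior L.dom ∧ L.proj C z = L.proj C x ∧ L.distTo C z ≤ L.distTo C x}

section Affine

variable {X Y : Type*} [NormedAddCommGroup X] [InnerProductSpace ℝ X] [FiniteDimensional ℝ X]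
  [NormedAddCommGroup Y] [InnerProductSpace ℝ Y] [FiniteDimensional ℝ Y]
  {I : Type*} {Yf : I → Type*} [∀ i, NormedAddCommGroup (Yf i)]
  [∀ i, InnerProductSpace ℝ (Yf i)] [∀ i, FiniteDimensional ℝ (Yf i)]

/-- Assumption H2₁: `φ*` is twice differentiable (with second derivative `hess`), and for all
`x ∈ int (dom φ) ∩ C`, `A ∘ ∇²φ*(∇φ(x)) ≠ 0` and
`sup_i ‖Aᵢ* (Aᵢ ∇²φ*(∇φ(x)) Aᵢ*)† Aᵢ‖ < ∞`. -/
def H21 (L : LegendreFn X) (A : ∀ i, X →L[ℝ] Yf i) (AY : X →L[ℝ] Y) (C : Set X)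
    (hess : X → X →L[ℝ] X) : Prop :=
  (∀ y ∈ interior L.domConj, HasFDerivAt L.gradConj (hess y) y) ∧
  ∀ x ∈ interior L.dom ∩ C,
    AY ∘L hess (L.grad x) ≠ 0 ∧
    ∃ M : ℝ, ∀ (i : I) (G : Yf i →L[ℝ] Yf i),
      IsMPInv (A i ∘L hess (L.grad x) ∘L ContinuousLinearMap.adjoint (A i)) G →
      ‖ContinuousLinearMap.adjoint (A i) ∘L G ∘L A i‖ ≤ M

/-- The orthogonal projection `Q_i(x)` onto `range (H(x) Aᵢ*)`, where `H(x)` (here `Hrt x`) is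
the positive square root of `∇²φ*(∇φ(x))`. -/
def Qproj (A : ∀ i, X →L[ℝ] Yf i) (Hrt : X → X →L[ℝ] X) (i : I) (x : X) : X →L[ℝ] X :=
  projL (LinearMap.range ((Hrt x ∘L ContinuousLinearMap.adjoint (A i) : Yf i →L[ℝ] X) : Yf i →ₗ[ℝ] X))

/-- The subspace `V(x) = range (H(x) A*)`. -/
def Vsub (AY : X →L[ℝ] Y) (Hrt : X → X →L[ℝ] X) (x : X) : Submodule ℝ X :=
  LinearMap.range ((Hrt x ∘L ContinuousLinearMap.adjoint AY : Y →L[ℝ] X) : Y →ₗ[ℝ] X)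

/-- `γ_𝒞(x) = inf_{v ∈ V(x) \ {0}} sup_i ‖Q_i(x) v‖² / ‖v‖²`. -/
def gammaC (A : ∀ i, X →L[ℝ] Yf i) (AY : X →L[ℝ] Y) (Hrt : X → X →L[ℝ] X) (x : X) : ℝ :=
  ⨅ v : {v : X // v ∈ Vsub AY Hrt x ∧ v ≠ 0},
    ⨆ i : I, ‖Qproj A Hrt i x v.1‖ ^ 2 / ‖v.1‖ ^ 2

/-- `σ_𝒞(x)`, the (deterministic, greedy) contraction factor. -/
def sigmaC (L : LegendreFn X) (Cs : I → Set X) (C : Set X) (γ : X → ℝ) (x : X) : ℝ :=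
  if x ∈ C then 1 - γ x
  else ⨆ z : ↥(Kset L C x \ C), ⨅ i : I, L.distTo C (L.proj (Cs i) z) / L.distTo C z

end Affine

section Stochastic

variable {X Y : Type*} [NormedAddCommGroup X] [InnerProductSpace ℝ X] [FiniteDimensional ℝ X]
  [NormedAddCommGroup Y] [InnerProductSpace ℝ Y] [FiniteDimensional ℝ Y]
  {I : Type*} {Yf : I → Type*} [∀ i, NormedAddCommGroup (Yf i)]
  [∀ i, InnerProductSpace ℝ (Yf i)] [∀ i, FiniteDimensional ℝ (Yf i)]
  {Ω : Type*} [MeasurableSpace Ω]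

/-- Assumption H2₂ (stochastic version of H2₁, with an essential supremum). -/
def H22 (L : LegendreFn X) (A : ∀ i, X →L[ℝ] Yf i) (AY : X →L[ℝ] Y) (C : Set X)
    (hess : X → X →L[ℝ] X) (P : Measure Ω) (ξ : Ω → I) : Prop :=
  (∀ y ∈ interior L.domConj, HasFDerivAt L.gradConj (hess y) y) ∧
  ∀ x ∈ interior L.dom ∩ C,
    AY ∘L hess (L.grad x) ≠ 0 ∧
    ∃ M : ℝ, ∀ᵐ ω ∂P, ∀ G : Yf (ξ ω) →L[ℝ] Yf (ξ ω),
      IsMPInv (A (ξ ω) ∘L hess (L.grad x) ∘L ContinuousLinearMap.adjoint (A (ξ ω))) G →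
      ‖ContinuousLinearMap.adjoint (A (ξ ω)) ∘L G ∘L A (ξ ω)‖ ≤ M

/-- `Q̄(x) = E[Q_ξ(x)]` (Bochner expectation). -/
def Qbar (A : ∀ i, X →L[ℝ] Yf i) (Hrt : X → X →L[ℝ] X) (P : Measure Ω) (ξ : Ω → I) (x : X) :
    X →L[ℝ] X :=
  ∫ ω, Qproj A Hrt (ξ ω) x ∂P

/-- `γ_{𝒞,μ}(x) = inf_{v ∈ V(x) \ {0}} ⟪Q̄(x) v, v⟫ / ‖v‖²`. -/
def gammaCmu (A : ∀ i, X →L[ℝ] Yf i) (AY : X →L[ℝ] Y) (Hrt : X → X →L[ℝ] X)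
    (P : Measure Ω) (ξ : Ω → I) (x : X) : ℝ :=
  ⨅ v : {v : X // v ∈ Vsub AY Hrt x ∧ v ≠ 0},
    ⟪Qbar A Hrt P ξ x v.1, v.1⟫_ℝ / ‖v.1‖ ^ 2

/-- `σ_{𝒞,μ}(x)`, the stochastic contraction factor. -/
def sigmaCmu (L : LegendreFn X) (Cs : I → Set X) (C : Set X) (γ : X → ℝ)
    (P : Measure Ω) (ξ : Ω → I) (x : X) : ℝ :=
  if x ∈ C then 1 - γ x
  else ⨆ z : ↥(Kset L C x \ C),
    (∫ ω, L.distTo C (L.proj (Cs (ξ ω)) z) ∂P) / L.distTo C z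

/-- `D̄_C(x) = E[D_{C_ξ}(x)]`. -/
def DbarFn (L : LegendreFn X) (Cs : I → Set X) (P : Measure Ω) (ξ : Ω → I) (x : X) : ℝ :=
  ∫ ω, L.distTo (Cs (ξ ω)) x ∂P

end Stochastic

/-!
Fejér monotonicity bounds `D_φ(z, x_k)` for a point `z ∈ C ∩ int (dom φ)`. As `z` is interior to
`dom φ`, the function `φ* - ⟪z, ·⟫` is coercive, so the gradients `∇φ(x_k)` stay in a compact
subset of `dom φ*`; since `dom φ*` is open, `φ - ⟪·, u⟫` is coercive uniformly for `u` in that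
compact set, which bounds `x_k` and its Bregman projections `p_k` onto `C`. For `k ≤ j`,
`D_φ(p_k, x_j) ≤ D_φ(p_k, x_k) = D_C(x_k) → 0`, so SC makes `(x_k)` Cauchy and `p_k - x_k → 0`.
The limit lies in `C` because `C` is closed, and in `int (dom φ)` because `‖∇φ(x_k)‖` stays
bounded, whereas essential smoothness would make it blow up at the boundary.
-/

theorem ConvexOn.inner_gradient_le_sub {X : Type*} [NormedAddCommGroup X]
    [InnerProductSpace ℝ X] [CompleteSpace X] {s : Set X} {f : X → ℝ} (hf : ConvexOn ℝ s f)
    {y z g : X} (hy : y ∈ s) (hz : z ∈ s) (hg : HasGradientAt f g y) :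
    ⟪g, z - y⟫_ℝ ≤ f z - f y := by
  set ℓ := AffineMap.lineMap (k := ℝ) y z
  have hline : HasDerivAt (f ∘ ℓ) ⟪g, z - y⟫_ℝ 0 := by
    have hg' : HasFDerivAt f (InnerProductSpace.toDual ℝ X g) (ℓ 0) := by
      simpa [ℓ] using hg.hasFDerivAt
    simpa using hg'.comp_hasDerivAt (0 : ℝ) AffineMap.hasDerivAt_lineMap
  have hslope := (hf.comp_affineMap ℓ).le_slope_of_hasDerivAt
    (by simpa [ℓ] using hy) (by simpa [ℓ] using hz) zero_lt_one hline
  simpa [slope, ℓ] using hslope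

theorem exists_norm_le_inner_eq {X : Type*} [NormedAddCommGroup X] [InnerProductSpace ℝ X]
    (w : X) {r : ℝ} (hr : 0 ≤ r) : ∃ d : X, ‖d‖ ≤ r ∧ ⟪w, d⟫_ℝ = r * ‖w‖ := by
  rcases eq_or_ne w 0 with rfl | hw
  · exact ⟨0, by simpa using hr, by simp⟩
  · have hw' : ‖w‖ ≠ 0 := norm_ne_zero_iff.2 hw
    refine ⟨(r / ‖w‖) • w, ?_, ?_⟩
    · rw [norm_smul, Real.norm_eq_abs, abs_div, abs_norm, abs_of_nonneg hr,
        div_mul_cancel₀ _ hw']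
    · rw [real_inner_smul_right, real_inner_self_eq_norm_sq]
      field_simp

theorem cauchySeq_of_tendsto_dist_of_le {α : Type*} [PseudoMetricSpace α] {x : ℕ → α}
    (h : ∀ k j : ℕ → ℕ, Tendsto k atTop atTop → (∀ N, k N ≤ j N) →
      Tendsto (fun N => dist (x (k N)) (x (j N))) atTop (𝓝 0)) :
    CauchySeq x := by
  refine cauchySeq_iff_tendsto_dist_atTop_0.2 (tendsto_iff_seq_tendsto.2 fun n hn => ?_)
  rw [← prod_atTop_atTop_eq] at hn
  have hmin : Tendsto (fun N => min (n N).1 (n N).2) atTop atTop :=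
    tendsto_inf_atTop _ (tendsto_fst.comp hn) (tendsto_snd.comp hn)
  refine (h _ (fun N => max (n N).1 (n N).2) hmin fun N => min_le_max).congr fun N => ?_
  rcases le_total (n N).1 (n N).2 with hle | hle
  · simp [min_eq_left hle, max_eq_right hle]
  · simp [min_eq_right hle, max_eq_left hle, dist_comm]

namespace LegendreFn

variable {X : Type*} [NormedAddCommGroup X] [InnerProductSpace ℝ X] [FiniteDimensional ℝ X]
  (L : LegendreFn X)

theorem inner_sub_le_conj {u w : X} (hu : u ∈ L.domConj) (hw : w ∈ L.dom) :
    ⟪w, u⟫_ℝ - L.f w ≤ L.conj u :=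
  (L.conj_spec u hu).1 ⟨w, hw, rfl⟩

theorem isGreatest_inner_grad_sub {y : X} (hy : y ∈ interior L.dom) :
    IsGreatest ((fun w => ⟪w, L.grad y⟫_ℝ - L.f w) '' L.dom) (⟪y, L.grad y⟫_ℝ - L.f y) := by
  refine ⟨⟨y, interior_subset hy, rfl⟩, forall_mem_image.2 fun w hw => ?_⟩
  have := L.convexOn.inner_gradient_le_sub (interior_subset hy) hw (L.hasGrad y hy)
  rw [inner_sub_right] at this
  linarith [real_inner_comm w (L.grad y), real_inner_comm y (L.grad y)]

theorem grad_mem_domConj {y : X} (hy : y ∈ interior L.dom) : L.grad y ∈ L.domConj :=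
  (L.domConj_spec _).2 (L.isGreatest_inner_grad_sub hy).bddAbove

theorem conj_grad {y : X} (hy : y ∈ interior L.dom) :
    L.conj (L.grad y) = ⟪y, L.grad y⟫_ℝ - L.f y :=
  (L.conj_spec _ (L.grad_mem_domConj hy)).unique (L.isGreatest_inner_grad_sub hy).isLUB

theorem breg_eq_conj_grad {y : X} (hy : y ∈ interior L.dom) (w : X) :
    L.breg w y = L.f w + L.conj (L.grad y) - ⟪w, L.grad y⟫_ℝ := by
  rw [L.conj_grad hy, breg, inner_sub_left]
  ring

theorem breg_nonneg {y w : X} (hy : y ∈ interior L.dom) (hw : w ∈ L.dom) : 0 ≤ L.breg w y := by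
  rw [L.breg_eq_conj_grad hy]
  linarith [L.inner_sub_le_conj (L.grad_mem_domConj hy) hw]

theorem breg_self (y : X) : L.breg y y = 0 := by
  simp [breg]

theorem convexOn_conj : ConvexOn ℝ L.domConj L.conj := by
  have key : ∀ u₁ ∈ L.domConj, ∀ u₂ ∈ L.domConj, ∀ a b : ℝ, 0 ≤ a → 0 ≤ b → a + b = 1 →
      ∀ w ∈ L.dom, ⟪w, a • u₁ + b • u₂⟫_ℝ - L.f w ≤ a * L.conj u₁ + b * L.conj u₂ := by
    intro u₁ h₁ u₂ h₂ a b ha hb hab w hw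
    have e₁ := mul_le_mul_of_nonneg_left (L.inner_sub_le_conj h₁ hw) ha
    have e₂ := mul_le_mul_of_nonneg_left (L.inner_sub_le_conj h₂ hw) hb
    rw [inner_add_right, real_inner_smul_right, real_inner_smul_right]
    linear_combination e₁ + e₂ + L.f w * hab
  have hmem : ∀ u₁ ∈ L.domConj, ∀ u₂ ∈ L.domConj, ∀ a b : ℝ, 0 ≤ a → 0 ≤ b → a + b = 1 →
      a • u₁ + b • u₂ ∈ L.domConj := fun u₁ h₁ u₂ h₂ a b ha hb hab =>
    (L.domConj_spec _).2 ⟨_, forall_mem_image.2 (key u₁ h₁ u₂ h₂ a b ha hb hab)⟩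
  exact ⟨hmem, fun u₁ h₁ u₂ h₂ a b ha hb hab =>
    (L.conj_spec _ (hmem u₁ h₁ u₂ h₂ a b ha hb hab)).2
      (forall_mem_image.2 (key u₁ h₁ u₂ h₂ a b ha hb hab))⟩

theorem exists_mul_norm_grad_sub_le_breg {z : X} (hz : z ∈ interior L.dom) :
    ∃ ε > 0, ∃ K : ℝ, ∀ y ∈ interior L.dom, ε * ‖L.grad y‖ - K ≤ L.breg z y := by
  obtain ⟨ε, hε, hball⟩ := Metric.nhds_basis_closedBall.mem_iff.1 (isOpen_interior.mem_nhds hz)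
  obtain ⟨K, hK⟩ := (isCompact_closedBall z ε).exists_bound_of_continuousOn
    (L.convexOn.continuousOn_interior.mono hball)
  refine ⟨ε, hε, 2 * K, fun y hy => ?_⟩
  obtain ⟨d, hd, hdu⟩ := exists_norm_le_inner_eq (L.grad y) hε.le
  have hzd : z + d ∈ Metric.closedBall z ε := by simpa using hd
  have h₁ := L.inner_sub_le_conj (L.grad_mem_domConj hy) (interior_subset (hball hzd))
  rw [inner_add_left, real_inner_comm (L.grad y) d, hdu] at h₁
  rw [L.breg_eq_conj_grad hy]
  linarith [abs_le.1 (hK _ hzd), abs_le.1 (hK z (Metric.mem_closedBall_self hε.le))]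

theorem isBounded_grad_of_breg_le {z : X} (hz : z ∈ interior L.dom) (M : ℝ) :
    Bornology.IsBounded (L.grad '' {y | y ∈ interior L.dom ∧ L.breg z y ≤ M}) := by
  obtain ⟨ε, hε, K, hK⟩ := L.exists_mul_norm_grad_sub_le_breg hz
  refine (Metric.isBounded_closedBall (x := 0) (r := (M + K) / ε)).subset ?_
  rintro _ ⟨y, ⟨hy, hzy⟩, rfl⟩
  rw [mem_closedBall_zero_iff, le_div_iff₀ hε]
  linarith [hK y hy]

theorem closure_grad_subset_domConj (z : X) (M : ℝ) :
    closure (L.grad '' {y | y ∈ interior L.dom ∧ L.breg z y ≤ M}) ⊆ L.domConj := by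
  have hclosed : IsClosed (⋂ w ∈ L.dom, {u : X | ⟪w, u⟫_ℝ - L.f w ≤ M - L.f z + ⟪z, u⟫_ℝ}) :=
    isClosed_biInter fun w _ => isClosed_le (by fun_prop) (by fun_prop)
  refine (closure_minimal ?_ hclosed).trans fun u hu =>
    (L.domConj_spec u).2 ⟨_, forall_mem_image.2 fun w hw => mem_iInter₂.1 hu w hw⟩
  rintro _ ⟨y, ⟨hy, hzy⟩, rfl⟩
  refine mem_iInter₂.2 fun w hw => ?_
  rw [L.breg_eq_conj_grad hy] at hzy
  rw [mem_ofPred_eq]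
  linarith [L.inner_sub_le_conj (L.grad_mem_domConj hy) hw]

theorem exists_mul_norm_sub_le_breg_of_isCompact (hopen : IsOpen L.domConj) {T : Set X}
    (hT : IsCompact T) (hTsub : T ⊆ L.domConj) :
    ∃ δ > 0, ∃ K : ℝ, ∀ y ∈ interior L.dom, L.grad y ∈ T →
      ∀ w ∈ L.dom, δ * ‖w‖ - K ≤ L.breg w y := by
  obtain ⟨δ, hδ, hth⟩ := hT.exists_cthickening_subset_open hopen hTsub
  have hcont : ContinuousOn L.conj L.domConj := by
    simpa [hopen.interior_eq] using L.convexOn_conj.continuousOn_interior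
  obtain ⟨K, hK⟩ := hT.cthickening.exists_bound_of_continuousOn (hcont.mono hth)
  refine ⟨δ, hδ, 2 * K, fun y hy hyT w hw => ?_⟩
  obtain ⟨d, hd, hwd⟩ := exists_norm_le_inner_eq w hδ.le
  have hud : L.grad y + d ∈ Metric.cthickening δ T :=
    Metric.mem_cthickening_of_dist_le _ _ δ T hyT (by simpa using hd)
  have h₁ := L.inner_sub_le_conj (hth hud) hw
  rw [inner_add_right, hwd] at h₁
  rw [L.breg_eq_conj_grad hy]
  linarith [abs_le.1 (hK _ hud), abs_le.1 (hK _ (Metric.self_subset_cthickening T hyT))]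

theorem isBounded_of_breg_le (hopen : IsOpen L.domConj) {z : X} (hz : z ∈ interior L.dom)
    (M M' : ℝ) :
    Bornology.IsBounded
      {w | w ∈ L.dom ∧ ∃ y ∈ interior L.dom, L.breg z y ≤ M ∧ L.breg w y ≤ M'} := by
  obtain ⟨δ, hδ, K, hK⟩ := L.exists_mul_norm_sub_le_breg_of_isCompact hopen
    (L.isBounded_grad_of_breg_le hz M).isCompact_closure (L.closure_grad_subset_domConj z M)
  refine (Metric.isBounded_closedBall (x := 0) (r := (M' + K) / δ)).subset ?_
  rintro w ⟨hw, y, hy, hzy, hwy⟩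
  rw [mem_closedBall_zero_iff, le_div_iff₀ hδ]
  linarith [hK y hy (subset_closure ⟨y, ⟨hy, hzy⟩, rfl⟩) w hw]

theorem mem_interior_dom_of_tendsto {z : X} (hz : z ∈ interior L.dom) {M : ℝ} {y : ℕ → X}
    (hy : ∀ k, y k ∈ interior L.dom) (hzy : ∀ k, L.breg z (y k) ≤ M) {q : X}
    (hq : Tendsto y atTop (𝓝 q)) : q ∈ interior L.dom := by
  by_contra hq_int
  obtain ⟨R, hR⟩ := isBounded_iff_forall_norm_le.1 (L.isBounded_grad_of_breg_le hz M)
  have hq_cl : q ∈ closure L.dom :=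
    mem_closure_of_tendsto hq (Eventually.of_forall fun k => interior_subset (hy k))
  obtain ⟨k, hk⟩ :=
    ((L.grad_blowup y q hy ⟨hq_cl, hq_int⟩ hq).eventually_gt_atTop R).exists
  exact hk.not_ge (hR _ ⟨y k, ⟨hy k, hzy k⟩, rfl⟩)

theorem isBregProj_proj {S : Set X} (hS : IsClosed S) (hSc : Convex ℝ S)
    (hne : (S ∩ interior L.dom).Nonempty) {y : X} (hy : y ∈ interior L.dom) :
    L.IsBregProj S y (L.proj S y) := by
  obtain ⟨p, ⟨hpS, hp⟩, hmin⟩ := L.proj_exists S hS hSc hne y hy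
  refine Classical.epsilon_spec (p := L.IsBregProj S y) ⟨p, hpS, hp, fun w hw => ?_⟩
  simp only [breg, inner_sub_left]
  linarith [hmin w hw]

variable {L} in
theorem IsBregProj.distTo_eq {S : Set X} {y p : X} (h : L.IsBregProj S y p) :
    L.distTo S y = L.breg p y :=
  IsLeast.csInf_eq ⟨⟨p, ⟨h.1, interior_subset h.2.1⟩, rfl⟩, forall_mem_image.2 h.2.2⟩

theorem cauchySeq_of_breg_tendsto_zero (hSC : SCcond L) {x p : ℕ → X}
    (hx : ∀ k, x k ∈ interior L.dom) (hp : ∀ k, p k ∈ interior L.dom)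
    (hxb : Bornology.IsBounded (range x)) (hpb : Bornology.IsBounded (range p))
    (hanti : ∀ k j, k ≤ j → L.breg (p k) (x j) ≤ L.breg (p k) (x k))
    (hD : Tendsto (fun k => L.breg (p k) (x k)) atTop (𝓝 0)) : CauchySeq x := by
  have hpx := hSC p x hp hx hpb hxb hD
  refine cauchySeq_of_tendsto_dist_of_le fun k j hk hkj => ?_
  have hbreg : Tendsto (fun N => L.breg (p (k N)) (x (j N))) atTop (𝓝 0) :=
    squeeze_zero (fun N => L.breg_nonneg (hx _) (interior_subset (hp _)))
      (fun N => hanti _ _ (hkj N)) (hD.comp hk)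
  have hpxj := hSC (p ∘ k) (x ∘ j) (fun N => hp _) (fun N => hx _)
    (hpb.subset (range_comp_subset_range _ _)) (hxb.subset (range_comp_subset_range _ _)) hbreg
  simpa [dist_eq_norm, sub_sub_sub_cancel_left] using (hpxj.sub (hpx.comp hk)).norm

end LegendreFn

theorem stmt_2_general {X : Type*} [NormedAddCommGroup X] [InnerProductSpace ℝ X]
    [FiniteDimensional ℝ X]
    (L : LegendreFn X) (C : Set X)
    (hCcl : IsClosed C) (hCcv : Convex ℝ C)
    (hH0 : H0 L C)
    (x : ℕ → X) (hx : ∀ k, x k ∈ interior L.dom)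
    (hfejer : ∀ z ∈ C, ∀ k, L.breg z (x (k + 1)) ≤ L.breg z (x k))
    (hD : Tendsto (fun k => L.distTo C (x k)) atTop (𝓝 0))
    (hSC : SCcond L) :
    ∃ p ∈ C ∩ interior L.dom, Tendsto x atTop (𝓝 p) := by
  obtain ⟨-, hopen, z, hzint, hzC⟩ := hH0
  set p := fun k => L.proj C (x k)
  have hp : ∀ k, L.IsBregProj C (x k) (p k) := fun k =>
    L.isBregProj_proj hCcl hCcv ⟨z, hzC, hzint⟩ (hx k)
  have hanti : ∀ w ∈ C, Antitone fun k => L.breg w (x k) := fun w hw =>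
    antitone_nat_of_succ_le (hfejer w hw)
  have hDp : Tendsto (fun k => L.breg (p k) (x k)) atTop (𝓝 0) := by
    simpa only [(hp _).distTo_eq] using hD
  have hzx : ∀ k, L.breg z (x k) ≤ L.breg z (x 0) := fun k => hanti z hzC k.zero_le
  have hxb : Bornology.IsBounded (range x) :=
    (L.isBounded_of_breg_le hopen hzint _ 0).subset <| by
      rintro _ ⟨k, rfl⟩
      exact ⟨interior_subset (hx k), x k, hx k, hzx k, (L.breg_self _).le⟩
  have hpb : Bornology.IsBounded (range p) :=
    (L.isBounded_of_breg_le hopen hzint _ _).subset <| by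
      rintro _ ⟨k, rfl⟩
      exact ⟨interior_subset (hp k).2.1, x k, hx k, hzx k,
        ((hp k).2.2 z ⟨hzC, interior_subset hzint⟩).trans (hzx k)⟩
  have hp_int : ∀ k, p k ∈ interior L.dom := fun k => (hp k).2.1
  obtain ⟨q, hq⟩ := cauchySeq_tendsto_of_complete <| L.cauchySeq_of_breg_tendsto_zero hSC hx
    hp_int hxb hpb (fun k j hkj => hanti _ (hp k).1 hkj) hDp
  have hpq : Tendsto p atTop (𝓝 q) := by
    simpa using (hSC p x hp_int hx hpb hxb hDp).add hq
  exact ⟨q, ⟨hCcl.mem_of_tendsto hpq (Eventually.of_forall fun k => (hp k).1),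
    L.mem_interior_dom_of_tendsto hzint hx hzx hq⟩, hq⟩

/-- A `D`-Fejér monotone sequence with `D_C(x_k) → 0` converges, under
condition SC, to a point of `C ∩ int (dom φ)`. -/
theorem stmt_2 {X : Type*} [NormedAddCommGroup X] [InnerProductSpace ℝ X]
    [FiniteDimensional ℝ X]
    (L : LegendreFn X) (C : Set X)
    (hCne : C.Nonempty) (hCcl : IsClosed C) (hCcv : Convex ℝ C)
    (hH0 : H0 L C)
    (x : ℕ → X) (hx : ∀ k, x k ∈ interior L.dom)
    (hfejer : ∀ z ∈ C, ∀ k, L.breg z (x (k + 1)) ≤ L.breg z (x k))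
    (hD : Tendsto (fun k => L.distTo C (x k)) atTop (𝓝 0))
    (hSC : SCcond L) :
    ∃ p ∈ C ∩ interior L.dom, Tendsto x atTop (𝓝 p) :=
  stmt_2_general L C hCcl hCcv hH0 x hx hfejer hD hSC
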